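/- Let n be a prime number and let Ω, Γ ⊆ U_n := {0,...,n-1} be nonempty index sets with |Γ| = |Ω| + 1. Then every nonzero complex vector c in the nullspace of the submatrix F_{Ω,Γ} of the n×n DFT matrix has exactly |Γ| nonzero entries. -/

import Mathlib

/-!
The heart of the matter is Chebotarev's theorem: for a prime `p`, a primitive `p`-th root of
unity `ξ` in a field of characteristic zero, and distinct `x_a`, distinct `y_b` in
`{0, …, p - 1}`, the matrix `(ξ ^ (x_a y_b))` is nonsingular.

Its determinant is `f(ξ)` for `f = det (X ^ (x_a y_b)) ∈ ℤ[X]`. Applying the Euler operator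
`X d/dX` `m` times to `f` and evaluating at `1` gives the signed moment
`∑_σ sgn σ (∑_i x_{σ i} y_i) ^ m`. The multinomial theorem writes it as a combination of the
determinants `det (x_a ^ μ_b)` with `∑ μ = m`; these vanish unless the `μ_b` are distinct, and
distinct naturals sum to at least `K = 0 + 1 + ⋯ + (k - 1)`, with equality only for the
permutations of `(0, …, k - 1)`. So the moment vanishes for `m < K` and equals
`K! / ∏ i! · V(x) V(y)` for `m = K`, with Vandermonde determinants `V`. Hence
`f = (X - 1) ^ K h` with `∏ i! · h(1) = V(x) V(y)`, which is prime to `p` since the `x_a` (and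
the `y_b`) are distinct modulo `p`. If `f(ξ) = 0` then `h(ξ) = 0`, so the cyclotomic polynomial
`Φ_p` divides `h` and `p = Φ_p(1)` divides `h(1)`.

Consequently every square submatrix of `F_{Ω,Γ}` is nonsingular, so a nonzero kernel vector
supported on at most `|Ω|` coordinates would give a nonsingular square system with a nonzero
solution.
-/

/-- `ξ = e^{-2πi/n}`, the primitive `n`-th root of unity used in the DFT. -/
noncomputable def dftXi (n : ℕ) : ℂ :=
  Complex.exp (-2 * (Real.pi : ℂ) * Complex.I / (n : ℂ))

/-- The `n × n` DFT matrix, `[F_n]_{k,l} = (1/√n) ξ^{kl}`. -/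
noncomputable def Fdft (n : ℕ) : Matrix (Fin n) (Fin n) ℂ :=
  Matrix.of fun k l => ((Real.sqrt n : ℝ) : ℂ)⁻¹ * dftXi n ^ ((k : ℕ) * (l : ℕ))

/-- The submatrix `F_{Ω,Γ}` of the DFT matrix, with rows indexed by `Ω` and columns by `Γ`
(both taken in increasing order). -/
noncomputable def FdftSub (n : ℕ) (Ω Γ : Finset (Fin n)) :
    Matrix (Fin Ω.card) (Fin Γ.card) ℂ :=
  Matrix.of fun a b => Fdft n (Ω.orderEmbOfFin rfl a) (Γ.orderEmbOfFin rfl b)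

open Polynomial Finset Function Matrix

namespace Polynomial

variable {R : Type*}

noncomputable def eulerOp [CommSemiring R] : R[X] →ₗ[R] R[X] :=
  LinearMap.mulLeft R X ∘ₗ derivative

lemma eulerOp_apply [CommSemiring R] (f : R[X]) : eulerOp f = X * derivative f := rfl

lemma eulerOp_pow_monomial [CommSemiring R] (m N : ℕ) (a : R) :
    (eulerOp ^ m) (monomial N a) = monomial N ((N : R) ^ m * a) := by
  induction m with
  | zero => simp
  | succ m ih =>
    rw [pow_succ', Module.End.mul_apply, ih, eulerOp_apply, derivative_monomial]
    cases N with
    | zero => simp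
    | succ N => rw [X_mul_monomial, Nat.add_sub_cancel, pow_succ]; ring_nf

lemma eulerOp_X_sub_one_pow_succ_mul [CommRing R] (r : ℕ) (h : R[X]) :
    eulerOp ((X - 1) ^ (r + 1) * h) =
      (X - 1) ^ r * (C ((r : R) + 1) * X * h + (X - 1) * (X * derivative h)) := by
  simp only [eulerOp_apply, derivative_mul, derivative_pow, derivative_sub, derivative_X,
    derivative_one]
  push_cast
  ring

lemma eulerOp_pow_X_sub_one_pow_mul [CommRing R] {m r : ℕ} (hmr : m ≤ r) (h : R[X]) :
    ∃ u : R[X], (eulerOp ^ m) ((X - 1) ^ r * h) = (X - 1) ^ (r - m) * u ∧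
      u.eval 1 = r.descFactorial m * h.eval 1 := by
  induction m generalizing r h with
  | zero => exact ⟨h, by simp, by simp⟩
  | succ m ih =>
    obtain ⟨r, rfl⟩ : ∃ r', r = r' + 1 := ⟨r - 1, by omega⟩
    obtain ⟨u, hu, hu1⟩ := ih (r := r) (by omega) _
    refine ⟨u, ?_, ?_⟩
    · rw [pow_succ, Module.End.mul_apply, eulerOp_X_sub_one_pow_succ_mul, hu,
        Nat.add_sub_add_right]
    · rw [hu1, Nat.succ_descFactorial_succ]
      simp only [eval_add, eval_mul, eval_C, eval_X, eval_sub, eval_one]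
      push_cast
      ring

lemma eval_one_eulerOp_pow_X_sub_one_pow_mul [CommRing R] (r : ℕ) (h : R[X]) :
    ((eulerOp ^ r) ((X - 1) ^ r * h)).eval 1 = r.factorial * h.eval 1 := by
  obtain ⟨u, hu, hu1⟩ := eulerOp_pow_X_sub_one_pow_mul le_rfl h
  rw [hu, Nat.sub_self, pow_zero, one_mul, hu1, Nat.descFactorial_self]

lemma X_sub_one_pow_dvd_of_eval_one_eulerOp_pow [CommRing R] [IsDomain R] [CharZero R]
    {f : R[X]} {K : ℕ} (hf : ∀ m < K, ((eulerOp ^ m) f).eval 1 = 0) : (X - 1) ^ K ∣ f := by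
  induction K with
  | zero => simp
  | succ K ih =>
    obtain ⟨h, rfl⟩ := ih fun m hm => hf m (by omega)
    have hK := hf K (by omega)
    rw [eval_one_eulerOp_pow_X_sub_one_pow_mul] at hK
    have hroot : h.IsRoot 1 :=
      (mul_eq_zero.mp hK).resolve_left (Nat.cast_ne_zero.mpr K.factorial_ne_zero)
    obtain ⟨g, rfl⟩ := (dvd_iff_isRoot.mpr hroot)
    rw [map_one, pow_succ]
    exact mul_dvd_mul_left _ (dvd_mul_right _ _)

end Polynomial

lemma Finset.eq_range_card_of_sum_le {s : Finset ℕ} (h : ∑ a ∈ s, a ≤ ∑ j ∈ range #s, j) :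
    s = range #s := by
  by_contra hne
  -- the elements of `range #s` missing from `s` are `< #s`, while the equally many elements of
  -- `s` outside `range #s` are `≥ #s`
  set r := range #s
  have hrs : (r \ s).Nonempty := by
    rw [sdiff_nonempty]
    exact fun hsub => hne (eq_of_subset_of_card_le hsub (by simp [r])).symm
  have hlow : ∑ a ∈ r \ s, a < #(r \ s) * #s := by
    simpa using sum_lt_sum_of_nonempty hrs (g := fun _ => #s)
      fun a ha => mem_range.mp (mem_sdiff.mp ha).1
  have hhigh : #(s \ r) * #s ≤ ∑ a ∈ s \ r, a := by
    simpa using card_nsmul_le_sum (s \ r) id #s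
      fun a ha => not_lt.mp fun hlt => (mem_sdiff.mp ha).2 (mem_range.mpr hlt)
  have hcard : #(r \ s) = #(s \ r) := card_sdiff_comm (by simp [r])
  have hr := sum_inter_add_sum_sdiff r s id
  have hs := sum_inter_add_sum_sdiff s r id
  rw [inter_comm] at hs
  simp only [id] at hr hs
  rw [hcard] at hlow
  omega

lemma exists_perm_eq_of_injective_of_sum_le {k : ℕ} {μ : Fin k → ℕ} (hμ : Injective μ)
    (h : ∑ i, μ i ≤ ∑ i : Fin k, (i : ℕ)) : ∃ τ : Equiv.Perm (Fin k), ∀ i, μ i = τ i := by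
  have hcard : #(univ.image μ) = k := by simp [card_image_of_injective _ hμ]
  have himage : univ.image μ = range k := by
    have := eq_range_card_of_sum_le (s := univ.image μ)
    rw [hcard, sum_image fun a _ b _ hab => hμ hab, ← Fin.sum_univ_eq_sum_range] at this
    exact this h
  have hlt (i : Fin k) : μ i < k := mem_range.mp (himage ▸ mem_image_of_mem μ (mem_univ i))
  have hinj : Injective fun i => (⟨μ i, hlt i⟩ : Fin k) := fun a b hab => hμ (Fin.mk.inj hab)
  exact ⟨Equiv.ofBijective _ hinj.bijective_of_finite, fun i => rfl⟩

section SignedMoment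

variable {R : Type*} [CommRing R] {k : ℕ}

def signedMoment (x y : Fin k → R) (m : ℕ) : R :=
  ∑ σ : Equiv.Perm (Fin k), (Equiv.Perm.sign σ : ℤ) * (∑ i, x (σ i) * y i) ^ m

lemma signedMoment_eq_sum_piAntidiag (x y : Fin k → R) (m : ℕ) :
    signedMoment x y m = ∑ μ ∈ piAntidiag univ m,
      (Nat.multinomial univ μ : R) * (∏ i, y i ^ μ i) * (of fun a b => x a ^ μ b).det := by
  simp_rw [signedMoment, sum_pow_eq_sum_piAntidiag, mul_sum, det_apply', mul_sum]
  rw [sum_comm]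
  refine sum_congr rfl fun μ _ => sum_congr rfl fun σ _ => ?_
  simp only [of_apply, mul_pow, prod_mul_distrib]
  ring

lemma det_of_pow_eq_zero_of_not_injective (x : Fin k → R) {μ : Fin k → ℕ}
    (hμ : ¬ Injective μ) : (of fun a b => x a ^ μ b).det = 0 := by
  obtain ⟨b, b', hbb, hne⟩ := not_injective_iff.mp hμ
  exact det_zero_of_column_eq hne fun a => by simp [hbb]

lemma det_of_pow_perm (x : Fin k → R) (τ : Equiv.Perm (Fin k)) :
    (of fun a b => x a ^ (τ b : ℕ)).det = Equiv.Perm.sign τ * (vandermonde x).det := by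
  rw [← det_permute']
  rfl

lemma det_vandermonde_eq_sum_perm (y : Fin k → R) :
    (vandermonde y).det =
      ∑ τ : Equiv.Perm (Fin k), Equiv.Perm.sign τ * ∏ i, y i ^ (τ i : ℕ) := by
  rw [← det_transpose, det_apply']
  rfl

lemma prod_factorial_mul_multinomial_perm (τ : Equiv.Perm (Fin k)) :
    (∏ i : Fin k, (i : ℕ).factorial) * Nat.multinomial univ (fun i => (τ i : ℕ)) =
      (∑ i : Fin k, (i : ℕ)).factorial := by
  rw [← Equiv.prod_comp τ fun i => (i : ℕ).factorial, Nat.multinomial_spec,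
    Equiv.sum_comp τ fun i => (i : ℕ)]

lemma signedMoment_eq_zero_of_lt (x y : Fin k → R) {m : ℕ} (hm : m < ∑ i : Fin k, (i : ℕ)) :
    signedMoment x y m = 0 := by
  rw [signedMoment_eq_sum_piAntidiag]
  refine sum_eq_zero fun μ hμ => ?_
  have hsum : ∑ i, μ i = m := (mem_piAntidiag.mp hμ).1
  suffices hμ : ¬ Injective μ by rw [det_of_pow_eq_zero_of_not_injective x hμ, mul_zero]
  intro hinj
  obtain ⟨τ, hτ⟩ := exists_perm_eq_of_injective_of_sum_le hinj (by omega)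
  rw [funext hτ, Equiv.sum_comp τ fun i => (i : ℕ)] at hsum
  omega

lemma prod_factorial_mul_signedMoment (x y : Fin k → R) :
    ((∏ i : Fin k, (i : ℕ).factorial : ℕ) : R) * signedMoment x y (∑ i : Fin k, (i : ℕ)) =
      ((∑ i : Fin k, (i : ℕ)).factorial : R) * ((vandermonde x).det * (vandermonde y).det) := by
  set K := ∑ i : Fin k, (i : ℕ)
  let ι : Equiv.Perm (Fin k) → Fin k → ℕ := fun τ i => τ i
  have hι : Injective ι := fun τ τ' h => Equiv.ext fun i => Fin.val_injective (congrFun h i)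
  have hsub : univ.image ι ⊆ piAntidiag univ K := by
    simp only [subset_iff, mem_image, mem_univ, true_and, mem_piAntidiag, ne_eq,
      forall_exists_index, forall_apply_eq_imp_iff]
    exact fun τ => ⟨Equiv.sum_comp τ fun i => (i : ℕ), fun _ _ => trivial⟩
  have hzero : ∀ μ ∈ piAntidiag univ K, μ ∉ univ.image ι →
      (Nat.multinomial univ μ : R) * (∏ i, y i ^ μ i) * (of fun a b => x a ^ μ b).det = 0 := by
    intro μ hμ hμι
    suffices hμ : ¬ Injective μ by rw [det_of_pow_eq_zero_of_not_injective x hμ, mul_zero]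
    intro hinj
    obtain ⟨τ, hτ⟩ := exists_perm_eq_of_injective_of_sum_le hinj (mem_piAntidiag.mp hμ).1.le
    exact hμι (mem_image.mpr ⟨τ, mem_univ τ, (funext hτ).symm⟩)
  rw [signedMoment_eq_sum_piAntidiag, ← sum_subset hsub hzero, sum_image fun τ _ τ' _ h => hι h,
    det_vandermonde_eq_sum_perm y, mul_sum, mul_sum, mul_sum]
  refine sum_congr rfl fun τ _ => ?_
  rw [det_of_pow_perm, ← prod_factorial_mul_multinomial_perm τ]
  push_cast
  ring

end SignedMoment

lemma det_of_X_pow_eq_sum_monomial {R : Type*} [CommRing R] {k : ℕ} (x y : Fin k → ℕ) :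
    (of fun a b => (X : R[X]) ^ (x a * y b)).det =
      ∑ σ : Equiv.Perm (Fin k), monomial (∑ i, x (σ i) * y i) ((Equiv.Perm.sign σ : ℤ) : R) := by
  rw [det_apply']
  refine sum_congr rfl fun σ _ => ?_
  simp only [of_apply, prod_pow_eq_pow_sum, ← C_mul_X_pow_eq_monomial, map_intCast]

lemma eval_one_eulerOp_pow_det_of_X_pow {R : Type*} [CommRing R] {k : ℕ} (x y : Fin k → ℕ)
    (m : ℕ) : ((eulerOp ^ m) (of fun a b => (X : R[X]) ^ (x a * y b)).det).eval 1 =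
      signedMoment (fun i => (x i : R)) (fun i => (y i : R)) m := by
  simp only [det_of_X_pow_eq_sum_monomial, map_sum, eulerOp_pow_monomial, eval_finsetSum,
    eval_monomial, one_pow, mul_one, signedMoment]
  refine sum_congr rfl fun σ _ => ?_
  push_cast
  ring

lemma exists_det_of_X_pow_eq_X_sub_one_pow_mul {R : Type*} [CommRing R] [IsDomain R]
    [CharZero R] {k : ℕ} (x y : Fin k → ℕ) :
    ∃ h : R[X], (of fun a b => (X : R[X]) ^ (x a * y b)).det =
        (X - 1) ^ (∑ i : Fin k, (i : ℕ)) * h ∧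
      ((∏ i : Fin k, (i : ℕ).factorial : ℕ) : R) * h.eval 1 =
        (vandermonde fun i => (x i : R)).det * (vandermonde fun i => (y i : R)).det := by
  set K := ∑ i : Fin k, (i : ℕ)
  obtain ⟨h, hh⟩ := X_sub_one_pow_dvd_of_eval_one_eulerOp_pow (R := R) (K := K)
    fun m hm => (eval_one_eulerOp_pow_det_of_X_pow x y m).trans
      (signedMoment_eq_zero_of_lt _ _ hm)
  refine ⟨h, hh, mul_left_cancel₀ (Nat.cast_ne_zero.mpr K.factorial_ne_zero) ?_⟩
  have hK := eval_one_eulerOp_pow_X_sub_one_pow_mul K h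
  rw [← hh, eval_one_eulerOp_pow_det_of_X_pow] at hK
  rw [← prod_factorial_mul_signedMoment, hK]
  ring

lemma prime_not_dvd_det_vandermonde {p : ℕ} (hp : p.Prime) {k : ℕ} {x : Fin k → Fin p}
    (hx : Injective x) : ¬ (p : ℤ) ∣ (vandermonde fun i => ((x i : ℕ) : ℤ)).det := by
  have := Fact.mk hp
  rw [← ZMod.intCast_zmod_eq_zero_iff_dvd, ← eq_intCast (Int.castRingHom (ZMod p)),
    RingHom.map_det]
  have hmap : (Int.castRingHom (ZMod p)).mapMatrix (vandermonde fun i => ((x i : ℕ) : ℤ)) =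
      vandermonde fun i => ((x i : ℕ) : ZMod p) := by
    ext; simp [vandermonde]
  rw [hmap, ← ne_eq, det_vandermonde_ne_zero_iff]
  intro a b hab
  rw [ZMod.natCast_eq_natCast_iff', Nat.mod_eq_of_lt (x a).2, Nat.mod_eq_of_lt (x b).2] at hab
  exact hx (Fin.ext hab)

lemma IsPrimitiveRoot.prime_dvd_eval_one_of_aeval_eq_zero {K : Type*} [Field K] [CharZero K]
    {p : ℕ} (hp : p.Prime) {ξ : K} (hξ : IsPrimitiveRoot ξ p) {h : ℤ[X]} (hh : aeval ξ h = 0) :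
    (p : ℤ) ∣ h.eval 1 := by
  have := Fact.mk hp
  obtain ⟨g, rfl⟩ : cyclotomic p ℤ ∣ h := by
    rw [cyclotomic_eq_minpoly hξ hp.pos]
    exact minpoly.isIntegrallyClosed_dvd (hξ.isIntegral hp.pos) hh
  rw [eval_mul, eval_one_cyclotomic_prime]
  exact dvd_mul_right _ _

theorem IsPrimitiveRoot.det_of_pow_mul_ne_zero {K : Type*} [Field K] [CharZero K] {p : ℕ}
    (hp : p.Prime) {ξ : K} (hξ : IsPrimitiveRoot ξ p) {k : ℕ} {x y : Fin k → Fin p}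
    (hx : Injective x) (hy : Injective y) : (of fun a b => ξ ^ ((x a : ℕ) * y b)).det ≠ 0 := by
  obtain ⟨h, hfac, hval⟩ :=
    exists_det_of_X_pow_eq_X_sub_one_pow_mul (R := ℤ) (fun i => (x i : ℕ)) (fun i => y i)
  intro hdet
  have haeval : aeval ξ (of fun a b => (X : ℤ[X]) ^ ((x a : ℕ) * y b)).det =
      (of fun a b => ξ ^ ((x a : ℕ) * y b)).det := by
    rw [AlgHom.map_det]
    congr 1
    ext
    simp
  have hroot : aeval ξ h = 0 := by
    rw [hdet, hfac, map_mul, map_pow, map_sub, aeval_X, map_one] at haeval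
    exact (mul_eq_zero.mp haeval).resolve_left
      (pow_ne_zero _ (sub_ne_zero.mpr (hξ.ne_one hp.one_lt)))
  have hdvd : (p : ℤ) ∣ (vandermonde fun i => ((x i : ℕ) : ℤ)).det *
      (vandermonde fun i => ((y i : ℕ) : ℤ)).det :=
    hval ▸ dvd_mul_of_dvd_right (hξ.prime_dvd_eval_one_of_aeval_eq_zero hp hroot) _
  rcases (Nat.prime_iff_prime_int.mp hp).dvd_or_dvd hdvd with hdx | hdy
  exacts [prime_not_dvd_det_vandermonde hp hx hdx, prime_not_dvd_det_vandermonde hp hy hdy]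

lemma Matrix.card_lt_ncard_support_of_mulVec_eq_zero {A m n : Type*} [CommRing A] [IsDomain A]
    [Fintype m] [Fintype n] {M : Matrix m n A}
    (hM : ∀ (k : ℕ) (f : Fin k ↪ m) (g : Fin k ↪ n), (M.submatrix f g).det ≠ 0)
    {c : n → A} (hc : M *ᵥ c = 0) (hc0 : c ≠ 0) : Fintype.card m < (support c).ncard := by
  classical
  by_contra! hle
  set T := (support c).toFinset
  rw [Set.ncard_eq_toFinset_card'] at hle
  let f : Fin #T ↪ m := (Fin.castLEEmb hle).trans (Fintype.equivFin m).symm.toEmbedding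
  let g : Fin #T ↪ n := T.equivFin.symm.toEmbedding.trans (Embedding.subtype _)
  refine hM _ f g (exists_mulVec_eq_zero_iff.mp ⟨c ∘ g, ?_, ?_⟩)
  · obtain ⟨t, ht⟩ := Function.ne_iff.mp hc0
    intro hcg
    exact ht (by simpa [g] using congrFun hcg (T.equivFin ⟨t, by simpa [T] using ht⟩))
  · ext a
    have hrow := congrFun hc (f a)
    simp only [mulVec, dotProduct, Pi.zero_apply, submatrix_apply] at hrow ⊢
    rw [← hrow, ← sum_subset (subset_univ T) fun t _ ht => by simp_all [T]]
    rw [← sum_coe_sort T, ← T.equivFin.symm.sum_comp]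
    rfl

lemma dftXi_isPrimitiveRoot {n : ℕ} (hn : n ≠ 0) : IsPrimitiveRoot (dftXi n) n := by
  have : dftXi n = (Complex.exp (2 * Real.pi * Complex.I / n))⁻¹ := by
    rw [dftXi, ← Complex.exp_neg]
    ring_nf
  exact this ▸ (Complex.isPrimitiveRoot_exp n hn).inv

lemma det_submatrix_FdftSub_ne_zero {n : ℕ} (hn : n.Prime) (Ω Γ : Finset (Fin n)) (k : ℕ)
    (f : Fin k ↪ Fin Ω.card) (g : Fin k ↪ Fin Γ.card) :
    ((FdftSub n Ω Γ).submatrix f g).det ≠ 0 := by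
  set x := Ω.orderEmbOfFin rfl ∘ f
  set y := Γ.orderEmbOfFin rfl ∘ g
  have hsub : (FdftSub n Ω Γ).submatrix f g =
      ((Real.sqrt n : ℝ) : ℂ)⁻¹ • of fun a b => dftXi n ^ ((x a : ℕ) * y b) := by
    ext; simp [FdftSub, Fdft, x, y]
  have hsqrt : ((Real.sqrt n : ℝ) : ℂ)⁻¹ ≠ 0 := by
    simpa using (Real.sqrt_pos.mpr (Nat.cast_pos.mpr hn.pos)).ne'
  rw [hsub, det_smul]
  exact mul_ne_zero (pow_ne_zero _ hsqrt)
    ((dftXi_isPrimitiveRoot hn.ne_zero).det_of_pow_mul_ne_zero hn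
      ((Ω.orderEmbOfFin rfl).injective.comp f.injective)
      ((Γ.orderEmbOfFin rfl).injective.comp g.injective))

theorem stmt12_general (n : ℕ) (hn : n.Prime) (Ω Γ : Finset (Fin n))
    (hΓ : Γ.card = Ω.card + 1)
    (c : Fin Γ.card → ℂ) (hc : (FdftSub n Ω Γ).mulVec c = 0) (hc0 : c ≠ 0) :
    {t : Fin Γ.card | c t ≠ 0}.ncard = Γ.card := by
  change (support c).ncard = Γ.card
  have hlt :=
    card_lt_ncard_support_of_mulVec_eq_zero (det_submatrix_FdftSub_ne_zero hn Ω Γ) hc hc0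
  have hle := Set.ncard_le_card (support c)
  rw [Fintype.card_fin] at hlt
  rw [Nat.card_eq_fintype_card, Fintype.card_fin] at hle
  exact le_antisymm hle (by omega)

/-- Let `n` be prime and `Ω, Γ ⊆ U_n` nonempty with `|Γ| = |Ω| + 1`.  Then every nonzero
complex vector in the nullspace of `F_{Ω,Γ}` has exactly `|Γ|` nonzero entries. -/
theorem stmt12 (n : ℕ) (hn : n.Prime) (Ω Γ : Finset (Fin n)) (hΩ : Ω.Nonempty)
    (hΓ : Γ.card = Ω.card + 1)
    (c : Fin Γ.card → ℂ) (hc : (FdftSub n Ω Γ).mulVec c = 0) (hc0 : c ≠ 0) :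
    {t : Fin Γ.card | c t ≠ 0}.ncard = Γ.card :=
  stmt12_general n hn Ω Γ hΓ c hc hc0
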